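/- arXiv:1605.02436 — 4 statements merged into one kernel-verified Lean document; each statement's English description precedes it below -/
import Mathlib

section
/- Let G be a locally compact Hausdorff topological group, Γ a discrete subgroup of G, and π : G → G/Γ the quotient map (with G/Γ carrying the quotient topology). Let V be a finite-dimensional real normed vector space, ρ : G → GL(V) a continuous representation, and m ∈ V a vector whose Γ-orbit ρ(Γ)m is a closed discrete subset of V. Define η(g) = ρ(g)m and Rep(gΓ) = {ρ(h)m : hΓ = gΓ}. Then for every compact set C ⊆ V and every compact set 𝒦 ⊆ G/Γ, there exists a compact set C̃ ⊆ G such that π(C̃) = {x ∈ 𝒦 : Rep(x) ∩ C ≠ ∅}. -/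
/-- `G` a locally compact Hausdorff topological group, `Γ` a
discrete subgroup, `π : G → G/Γ` the quotient map, `V` a finite-dimensional real
normed vector space, `ρ : G → GL(V)` a continuous representation, `m ∈ V` with
`ρ(Γ)m` closed and discrete in `V`.  Then for every compact `C ⊆ V` and compact
`𝓚 ⊆ G/Γ` there is a compact `Ctilde ⊆ G` with
`π(Ctilde) = {x ∈ 𝓚 : Rep(x) ∩ C ≠ ∅}`, where `Rep(gΓ) = {ρ(h)m : hΓ = gΓ}`. -/
theorem compact_lift_of_rep_meets_compact
    {G : Type*} [Group G] [TopologicalSpace G] [IsTopologicalGroup G]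
    [LocallyCompactSpace G] [T2Space G]
    (Γ : Subgroup G) [DiscreteTopology Γ]
    {V : Type*} [NormedAddCommGroup V] [NormedSpace ℝ V] [FiniteDimensional ℝ V]
    (ρ : G →* LinearMap.GeneralLinearGroup ℝ V)
    (hρ : Continuous fun q : G × V => (ρ q.1 : V →ₗ[ℝ] V) q.2)
    (m : V)
    (horb_closed : IsClosed {v : V | ∃ γ ∈ Γ, v = (ρ γ : V →ₗ[ℝ] V) m})
    (horb_disc : DiscreteTopology {v : V | ∃ γ ∈ Γ, v = (ρ γ : V →ₗ[ℝ] V) m})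
    (Rep : G ⧸ Γ → Set V)
    (hRep : ∀ x, Rep x =
      {v | ∃ h : G, (h : G ⧸ Γ) = x ∧ v = (ρ h : V →ₗ[ℝ] V) m})
    (C : Set V) (hC : IsCompact C)
    (𝓚 : Set (G ⧸ Γ)) (h𝓚 : IsCompact 𝓚) :
    ∃ Ctilde : Set G, IsCompact Ctilde ∧
      (QuotientGroup.mk : G → G ⧸ Γ) '' Ctilde = {x ∈ 𝓚 | (Rep x ∩ C).Nonempty} := by
  classical
  set π : G → G ⧸ Γ := QuotientGroup.mk with hπdef
  -- basic cancellation fact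
  have hmul : ∀ (a b : G) (x : V),
      (ρ (a * b) : V →ₗ[ℝ] V) x = (ρ a : V →ₗ[ℝ] V) ((ρ b : V →ₗ[ℝ] V) x) := by
    intro a b x
    rw [map_mul, Units.val_mul, Module.End.mul_apply]
  have hcancel : ∀ (g : G) (x : V), (ρ g⁻¹ : V →ₗ[ℝ] V) ((ρ g : V →ₗ[ℝ] V) x) = x := by
    intro g x
    rw [← hmul, inv_mul_cancel, map_one, Units.val_one, Module.End.one_apply]
  -- continuity facts
  have hcont₂ : ∀ v : V, Continuous fun g : G => (ρ g : V →ₗ[ℝ] V) v := fun v =>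
    hρ.comp (continuous_id.prodMk continuous_const)
  -- the quotient is Hausdorff
  have hT2 : T2Space (G ⧸ Γ) := by
    rw [t2_iff_isClosed_diagonal]
    have h := (QuotientGroup.isOpenQuotientMap_mk (N := Γ)).prodMap
      (QuotientGroup.isOpenQuotientMap_mk (N := Γ))
    rw [← h.isQuotientMap.isClosed_preimage]
    have heq : Prod.map π π ⁻¹' Set.diagonal (G ⧸ Γ)
        = (fun p : G × G => p.1⁻¹ * p.2) ⁻¹' (Γ : Set G) := by
      ext p
      simp only [Set.mem_preimage, Set.mem_diagonal_iff, Prod.map_fst, Prod.map_snd]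
      exact QuotientGroup.eq
    rw [heq]
    exact Subgroup.isClosed_of_discrete.preimage
      ((continuous_fst.inv).mul continuous_snd)
  -- a compact lift of 𝓚
  obtain ⟨K, hKcomp, hKsub, hKimg⟩ : ∃ K : Set G, IsCompact K ∧ K ⊆ π ⁻¹' 𝓚 ∧
      π '' K = 𝓚 := by
    have hcover : ∀ x : G ⧸ Γ, ∃ Kx : Set G, IsCompact Kx ∧ π '' Kx ∈ nhds x := by
      intro x
      obtain ⟨g, rfl⟩ := QuotientGroup.mk_surjective (s := Γ) x
      obtain ⟨Kx, hKx, hKxn⟩ := exists_compact_mem_nhds g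
      refine ⟨Kx, hKx, ?_⟩
      rw [← (QuotientGroup.isOpenQuotientMap_mk (N := Γ)).map_nhds_eq g]
      exact Filter.image_mem_map hKxn
    choose Kf hKfc hKfn using hcover
    obtain ⟨t, -, hco⟩ := h𝓚.elim_nhds_subcover (fun x => π '' Kf x) fun x _ => hKfn x
    refine ⟨(⋃ x ∈ t, Kf x) ∩ π ⁻¹' 𝓚, ?_, Set.inter_subset_right, ?_⟩
    · exact ((t.finite_toSet.isCompact_biUnion fun x _ => hKfc x).inter_right
        ((h𝓚.isClosed.preimage (continuous_quotient_mk'))))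
    · apply Set.Subset.antisymm
      · rintro y ⟨k, ⟨-, hk2⟩, rfl⟩
        exact hk2
      · intro x hx
        obtain ⟨_, hU, hxU⟩ := Set.mem_iUnion₂.mp (hco hx)
        obtain ⟨k, hk, hkx⟩ := hxU
        exact ⟨k, ⟨Set.mem_biUnion hU hk, by rw [Set.mem_preimage, hkx]; exact hx⟩, hkx⟩
  -- the orbit
  set Orb : Set V := {v : V | ∃ γ ∈ Γ, v = (ρ γ : V →ₗ[ℝ] V) m} with hOrb
  -- the relevant finite set of orbit points
  set D : Set V := (fun q : G × V => (ρ q.1⁻¹ : V →ₗ[ℝ] V) q.2) '' (K ×ˢ C) with hD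
  have hDcomp : IsCompact D := by
    apply (hKcomp.prod hC).image
    exact hρ.comp ((continuous_fst.inv).prodMk continuous_snd)
  have hFcomp : IsCompact (Orb ∩ D) := hDcomp.inter_left horb_closed
  have hFfin : (Orb ∩ D).Finite :=
    hFcomp.finite (isDiscrete_iff_discreteTopology.mpr (DiscreteTopology.of_subset horb_disc Set.inter_subset_left))
  -- choose a group element for each orbit point
  have hchoice : ∀ v ∈ Orb ∩ D, ∃ γ : G, γ ∈ Γ ∧ v = (ρ γ : V →ₗ[ℝ] V) m := by
    rintro v ⟨⟨γ, hγ, hv⟩, -⟩; exact ⟨γ, hγ, hv⟩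
  choose! γf hγf1 hγf2 using hchoice
  -- the compact lift
  refine ⟨⋃ v ∈ Orb ∩ D, (fun k => k * γf v) '' (K ∩ {k | (ρ k : V →ₗ[ℝ] V) v ∈ C}),
    ?_, ?_⟩
  · apply hFfin.isCompact_biUnion
    intro v _
    apply IsCompact.image _ (continuous_mul_right (γf v))
    exact hKcomp.inter_right ((hC.isClosed.preimage (hcont₂ v)))
  · apply Set.Subset.antisymm
    · rintro x ⟨g, hg, rfl⟩
      obtain ⟨v, hv, k, ⟨hkK, hkC⟩, rfl⟩ := Set.mem_iUnion₂.mp hg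
      have hπeq : π (k * γf v) = π k := QuotientGroup.mk_mul_of_mem k (hγf1 v hv)
      constructor
      · rw [hπeq]; exact hKsub hkK
      · refine ⟨(ρ (k * γf v) : V →ₗ[ℝ] V) m, ?_, ?_⟩
        · rw [hRep]; exact ⟨k * γf v, rfl, rfl⟩
        · rw [hmul, ← hγf2 v hv]; exact hkC
    · rintro x ⟨hx𝓚, w, hwRep, hwC⟩
      rw [hRep] at hwRep
      obtain ⟨h, hhx, rfl⟩ := hwRep
      obtain ⟨k, hkK, hkx⟩ := (Set.ext_iff.mp hKimg x).mpr hx𝓚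
      -- h = k * γ₀ with γ₀ ∈ Γ
      have hγ₀ : k⁻¹ * h ∈ Γ := QuotientGroup.eq.mp (show π k = π h by rw [hkx, hhx])
      set v : V := (ρ (k⁻¹ * h) : V →ₗ[ℝ] V) m with hvdef
      have hvOrb : v ∈ Orb := ⟨k⁻¹ * h, hγ₀, rfl⟩
      have hkv : (ρ k : V →ₗ[ℝ] V) v = (ρ h : V →ₗ[ℝ] V) m := by
        rw [hvdef, ← hmul, mul_inv_cancel_left]
      have hvD : v ∈ D := by
        refine ⟨(k, (ρ h : V →ₗ[ℝ] V) m), ⟨hkK, hwC⟩, ?_⟩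
        simp only [← hkv, hcancel]
      have hvF : v ∈ Orb ∩ D := ⟨hvOrb, hvD⟩
      refine ⟨k * γf v, Set.mem_biUnion hvF ⟨k, ⟨hkK, ?_⟩, rfl⟩, ?_⟩
      · rw [Set.mem_setOf_eq, hkv]; exact hwC
      · rw [show π (k * γf v) = π k from QuotientGroup.mk_mul_of_mem k (hγf1 v hvF), hkx]
end

section
/- Let G be a locally compact Hausdorff topological group, Γ a discrete subgroup of G, and π : G → G/Γ the quotient map. Let V be a finite-dimensional real normed vector space, ρ : G → GL(V) a continuous representation, and m ∈ V a vector whose Γ-orbit ρ(Γ)m is a closed discrete subset of V. Define η(g) = ρ(g)m, and for D ⊆ V and γ ∈ Γ set 𝔒^γ(D) = {gΓ ∈ G/Γ : η(g) ∈ D and η(gγ) ∈ D}. Let D ⊆ V be compact and 𝒦 ⊆ G/Γ be compact. Then the family of sets {𝒦 ∩ 𝔒^γ(D)}_{γ ∈ Γ} contains only finitely many distinct elements; moreover, for each γ ∈ Γ there exists a compact set C̃_γ ⊆ {g ∈ G : η(g) ∈ D and η(gγ) ∈ D} such that 𝒦 ∩ 𝔒^γ(D) = π(C̃_γ). -/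
open Topology


/-- With `G` a locally compact Hausdorff topological group, `Γ`
a discrete subgroup, `π : G → G/Γ` the quotient map, `V` a finite-dimensional
real normed vector space, `ρ : G → GL(V)` a continuous representation, and
`m ∈ V` with `ρ(Γ)m` closed and discrete in `V`, let `η g = ρ(g) m` and, for
`D ⊆ V`, `γ ∈ Γ`, let `𝔒 γ D = {gΓ : η g ∈ D, η (gγ) ∈ D}`.  If `D ⊆ V` and
`𝓚 ⊆ G/Γ` are compact, then the family `{𝓚 ∩ 𝔒 γ D}_{γ ∈ Γ}` has only finitely
many distinct members, and for each `γ ∈ Γ` there is a compact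
`Ctilde_γ ⊆ {g : η g ∈ D ∧ η (gγ) ∈ D}` with `𝓚 ∩ 𝔒 γ D = π(Ctilde_γ)`. -/
theorem overlap_family_finite_and_compactly_covered
    {G : Type*} [Group G] [TopologicalSpace G] [IsTopologicalGroup G]
    [LocallyCompactSpace G] [T2Space G]
    (Γ : Subgroup G) [DiscreteTopology Γ]
    {V : Type*} [NormedAddCommGroup V] [NormedSpace ℝ V] [FiniteDimensional ℝ V]
    (ρ : G →* LinearMap.GeneralLinearGroup ℝ V)
    (hρ : Continuous fun q : G × V => (ρ q.1 : V →ₗ[ℝ] V) q.2)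
    (m : V)
    (horb_closed : IsClosed {v : V | ∃ γ ∈ Γ, v = (ρ γ : V →ₗ[ℝ] V) m})
    (horb_disc : DiscreteTopology {v : V | ∃ γ ∈ Γ, v = (ρ γ : V →ₗ[ℝ] V) m})
    (η : G → V) (hη : ∀ g, η g = (ρ g : V →ₗ[ℝ] V) m)
    (𝔒 : G → Set V → Set (G ⧸ Γ))
    (h𝔒 : ∀ γ D, 𝔒 γ D =
      {x | ∃ g : G, (g : G ⧸ Γ) = x ∧ η g ∈ D ∧ η (g * γ) ∈ D})
    (D : Set V) (hD : IsCompact D)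
    (𝓚 : Set (G ⧸ Γ)) (h𝓚 : IsCompact 𝓚) :
    {S : Set (G ⧸ Γ) | ∃ γ ∈ Γ, S = 𝓚 ∩ 𝔒 γ D}.Finite ∧
    ∀ γ ∈ Γ, ∃ Ctilde : Set G, IsCompact Ctilde ∧
      Ctilde ⊆ {g : G | η g ∈ D ∧ η (g * γ) ∈ D} ∧
      𝓚 ∩ 𝔒 γ D = (QuotientGroup.mk : G → G ⧸ Γ) '' Ctilde := by
  classical
  -- basic continuity facts
  have hηc : Continuous η := by
    have h1 : Continuous fun g : G => (ρ g : V →ₗ[ℝ] V) m :=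
      hρ.comp (continuous_id.prodMk continuous_const)
    have : η = fun g : G => (ρ g : V →ₗ[ℝ] V) m := funext hη
    rw [this]; exact h1
  have hcomp : ∀ a b : G, (ρ (a * b) : V →ₗ[ℝ] V) m
      = (ρ a : V →ₗ[ℝ] V) ((ρ b : V →ₗ[ℝ] V) m) := by
    intro a b; simp [map_mul]
  -- Γ is closed in G
  have hΓclosed : IsClosed (Γ : Set G) := by
    obtain ⟨U, hU1, hUΓ⟩ :=
      nhds_inter_eq_singleton_of_mem_discrete (s := (Γ : Set G))
        (isDiscrete_iff_discreteTopology.mpr ‹_›) Γ.one_mem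
    have hc : ContinuousAt (fun p : G × G => p.1⁻¹ * p.2) (1, 1) :=
      (continuous_fst.inv.mul continuous_snd).continuousAt
    have hpre : (fun p : G × G => p.1⁻¹ * p.2) ⁻¹' U ∈ 𝓝 ((1 : G), (1 : G)) :=
      hc (by simpa using hU1)
    rw [nhds_prod_eq] at hpre
    obtain ⟨W1, hW1, W2, hW2, hWsub⟩ := Filter.mem_prod_iff.mp hpre
    have hW : W1 ∩ W2 ∈ 𝓝 (1 : G) := Filter.inter_mem hW1 hW2
    apply isClosed_of_closure_subset
    intro x hx
    rw [mem_closure_iff_nhds] at hx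
    have hNx : (fun g : G => x⁻¹ * g) ⁻¹' (W1 ∩ W2) ∈ 𝓝 x := by
      apply (continuous_const.mul continuous_id).continuousAt.preimage_mem_nhds
      simpa using hW
    obtain ⟨γ, hγW, hγΓ⟩ := hx _ hNx
    have huniq : ∀ γ' : G, x⁻¹ * γ' ∈ W1 ∩ W2 → γ' ∈ (Γ : Set G) → γ' = γ := by
      intro γ' hW' hΓ'
      have h1 : (x⁻¹ * γ)⁻¹ * (x⁻¹ * γ') ∈ U := by
        simpa using hWsub (Set.mk_mem_prod hγW.1 hW'.2)
      have h2 : (x⁻¹ * γ)⁻¹ * (x⁻¹ * γ') = γ⁻¹ * γ' := by group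
      have h3 : γ⁻¹ * γ' ∈ U ∩ (Γ : Set G) :=
        ⟨h2 ▸ h1, mul_mem (inv_mem hγΓ) hΓ'⟩
      rw [hUΓ] at h3
      have h4 : γ⁻¹ * γ' = 1 := h3
      have := inv_mul_eq_one.mp h4
      exact this.symm
    have hxγ : x ∈ closure ({γ} : Set G) := by
      rw [mem_closure_iff_nhds]
      intro t ht
      obtain ⟨γ', hγ'⟩ := hx _ (Filter.inter_mem ht hNx)
      refine ⟨γ', hγ'.1.1, ?_⟩
      exact huniq γ' hγ'.1.2 hγ'.2
    rw [closure_singleton] at hxγ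
    rw [hxγ]
    exact hγΓ
  -- the quotient is Hausdorff
  haveI hT2 : T2Space (G ⧸ Γ) := by
    rw [t2_iff_isClosed_diagonal]
    have hq := (QuotientGroup.isOpenQuotientMap_mk (N := Γ)).prodMap
      (QuotientGroup.isOpenQuotientMap_mk (N := Γ))
    rw [← hq.isQuotientMap.isClosed_preimage]
    have heq : Prod.map (QuotientGroup.mk : G → G ⧸ Γ) (QuotientGroup.mk : G → G ⧸ Γ)
        ⁻¹' (Set.diagonal (G ⧸ Γ)) = (fun p : G × G => p.1⁻¹ * p.2) ⁻¹' (Γ : Set G) := by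
      ext p
      simp only [Set.mem_preimage, Set.mem_diagonal_iff, Prod.map_apply, SetLike.mem_coe]
      exact QuotientGroup.eq
    rw [heq]
    exact hΓclosed.preimage (continuous_fst.inv.mul continuous_snd)
  -- lift 𝓚 to a compact set K with π '' K = 𝓚
  obtain ⟨K, hK, hπK⟩ : ∃ K : Set G, IsCompact K ∧
      (QuotientGroup.mk : G → G ⧸ Γ) '' K = 𝓚 := by
    obtain ⟨K₀, hK₀, h𝓚K₀⟩ : ∃ K₀ : Set G, IsCompact K₀ ∧
        𝓚 ⊆ (QuotientGroup.mk : G → G ⧸ Γ) '' K₀ := by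
      have hsurj : ∀ x : G ⧸ Γ, ∃ g : G, (g : G ⧸ Γ) = x := fun x => Quot.exists_rep x
      choose gx hgx using hsurj
      have hnb : ∀ x : G ⧸ Γ, ∃ C : Set G, IsCompact C ∧ C ∈ 𝓝 (gx x) :=
        fun x => exists_compact_mem_nhds (gx x)
      choose C hCc hCn using hnb
      have hUnb : ∀ x ∈ 𝓚, (QuotientGroup.mk : G → G ⧸ Γ) '' C x ∈ 𝓝 x := by
        intro x _
        have := (QuotientGroup.isOpenQuotientMap_mk (N := Γ)).map_nhds_eq (gx x)
        rw [hgx x] at this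
        rw [← this]
        exact Filter.image_mem_map (hCn x)
      obtain ⟨t, ht⟩ := h𝓚.elim_nhds_subcover' (fun x _ => (QuotientGroup.mk : G → G ⧸ Γ) '' C x) hUnb
      refine ⟨⋃ x ∈ t, C x, t.finite_toSet.isCompact_biUnion (fun x _ => hCc x), ?_⟩
      intro x hx
      obtain ⟨i, hi, hxi⟩ := Set.mem_iUnion₂.mp (ht hx)
      rw [Set.image_iUnion₂]
      exact Set.mem_iUnion₂.mpr ⟨i, hi, hxi⟩
    refine ⟨K₀ ∩ (QuotientGroup.mk : G → G ⧸ Γ) ⁻¹' 𝓚,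
      hK₀.inter_right ((h𝓚.isClosed).preimage continuous_quot_mk), ?_⟩
    apply Set.Subset.antisymm
    · rintro _ ⟨g, ⟨_, hg2⟩, rfl⟩; exact hg2
    · intro x hx
      obtain ⟨g, hg, hgx⟩ := h𝓚K₀ hx
      exact ⟨g, ⟨hg, by rw [Set.mem_preimage, hgx]; exact hx⟩, hgx⟩
  -- the compact set E and the finite set of relevant orbit points
  set E : Set V := (fun p : G × V => (ρ p.1⁻¹ : V →ₗ[ℝ] V) p.2) '' (K ×ˢ D) with hEdef
  have hEcpt : IsCompact E :=
    (hK.prod hD).image (hρ.comp (continuous_fst.inv.prodMk continuous_snd))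
  have hEmem : ∀ {k : G} {d : V}, k ∈ K → d ∈ D → (ρ k⁻¹ : V →ₗ[ℝ] V) d ∈ E :=
    fun {k d} hk hd => ⟨(k, d), ⟨hk, hd⟩, rfl⟩
  set O : Set V := {v : V | ∃ γ ∈ Γ, v = (ρ γ : V →ₗ[ℝ] V) m} with hOdef
  have hOEfin : (O ∩ E).Finite := by
    have h1 : Filter.Tendsto (Subtype.val : O → V) Filter.cofinite (Filter.cocompact V) :=
      horb_closed.tendsto_coe_cofinite_of_isDiscrete (isDiscrete_iff_discreteTopology.mpr horb_disc)
    have h2 : ((Subtype.val : O → V) ⁻¹' E).Finite :=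
      tendsto_cofinite_cocompact_iff.mp h1 E hEcpt
    have h3 : O ∩ E = (Subtype.val : O → V) '' ((Subtype.val : O → V) ⁻¹' E) := by
      rw [Set.image_preimage_eq_inter_range, Subtype.range_coe, Set.inter_comm]
    rw [h3]
    exact h2.image _
  -- the finite index sets P γ and the map Φ
  set Q : Set (V × V) := (O ∩ E) ×ˢ (O ∩ E) with hQdef
  have hQfin : Q.Finite := hOEfin.prod hOEfin
  set P : G → Set (V × V) := fun γ =>
    {p : V × V | (∃ δ ∈ Γ, p.1 = (ρ δ : V →ₗ[ℝ] V) m ∧ p.2 = (ρ (δ * γ) : V →ₗ[ℝ] V) m)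
      ∧ p.1 ∈ E ∧ p.2 ∈ E} with hPdef
  have hPQ : ∀ γ ∈ Γ, P γ ⊆ Q := by
    intro γ hγ p hp
    obtain ⟨⟨δ, hδ, h1, h2⟩, hE1, hE2⟩ := hp
    exact ⟨⟨⟨δ, hδ, h1⟩, hE1⟩, ⟨⟨δ * γ, mul_mem hδ hγ, h2⟩, hE2⟩⟩
  set Φ : Set (V × V) → Set (G ⧸ Γ) := fun S =>
    {x : G ⧸ Γ | ∃ k ∈ K, (k : G ⧸ Γ) = x ∧
      ∃ p ∈ S, (ρ k : V →ₗ[ℝ] V) p.1 ∈ D ∧ (ρ k : V →ₗ[ℝ] V) p.2 ∈ D} with hΦdef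
  -- key characterization
  have hkey : ∀ γ ∈ Γ, 𝓚 ∩ 𝔒 γ D = Φ (P γ) := by
    intro γ hγ
    ext x
    constructor
    · rintro ⟨hx𝓚, hx𝔒⟩
      rw [h𝔒] at hx𝔒
      obtain ⟨g, hgx, hg1, hg2⟩ := hx𝔒
      rw [← hπK] at hx𝓚
      obtain ⟨k, hkK, hkx⟩ := hx𝓚
      have hδΓ : k⁻¹ * g ∈ Γ := QuotientGroup.eq.mp (hkx.trans hgx.symm)
      refine ⟨k, hkK, hkx, ((ρ (k⁻¹ * g) : V →ₗ[ℝ] V) m,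
        (ρ (k⁻¹ * (g * γ)) : V →ₗ[ℝ] V) m), ?_, ?_, ?_⟩
      · refine ⟨⟨k⁻¹ * g, hδΓ, rfl, by rw [mul_assoc]⟩, ?_, ?_⟩
        · rw [hcomp k⁻¹ g, ← hη g]
          exact hEmem hkK hg1
        · rw [hcomp k⁻¹ (g * γ), ← hη (g * γ)]
          exact hEmem hkK hg2
      · rw [← hcomp k (k⁻¹ * g), mul_inv_cancel_left, ← hη g]
        exact hg1
      · rw [← hcomp k (k⁻¹ * (g * γ)), mul_inv_cancel_left, ← hη (g * γ)]
        exact hg2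
    · rintro ⟨k, hkK, hkx, p, ⟨⟨δ, hδ, hp1, hp2⟩, _, _⟩, hD1, hD2⟩
      constructor
      · rw [← hπK]; exact ⟨k, hkK, hkx⟩
      · rw [h𝔒]
        refine ⟨k * δ, ?_, ?_, ?_⟩
        · rw [QuotientGroup.mk_mul_of_mem k hδ]; exact hkx
        · rw [hη, hcomp k δ, ← hp1]; exact hD1
        · rw [hη, mul_assoc, hcomp k (δ * γ), ← hp2]; exact hD2
  constructor
  -- Part 1 : finiteness of the family
  · have hsub : {S : Set (G ⧸ Γ) | ∃ γ ∈ Γ, S = 𝓚 ∩ 𝔒 γ D} ⊆ Φ '' {T | T ⊆ Q} := by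
      rintro S ⟨γ, hγ, rfl⟩
      exact ⟨P γ, hPQ γ hγ, (hkey γ hγ).symm⟩
    exact (hQfin.finite_subsets.image Φ).subset hsub
  -- Part 2 : compact covering
  · intro γ hγ
    have hPfin : (P γ).Finite := hQfin.subset (hPQ γ hγ)
    have hchoice : ∀ p ∈ P γ, ∃ δ, δ ∈ Γ ∧ p.1 = (ρ δ : V →ₗ[ℝ] V) m
        ∧ p.2 = (ρ (δ * γ) : V →ₗ[ℝ] V) m := by
      intro p hp
      obtain ⟨⟨δ, hδ, h1, h2⟩, _, _⟩ := hp
      exact ⟨δ, hδ, h1, h2⟩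
    choose! δf hδf1 hδf2 hδf3 using hchoice
    set A : Set G := ⋃ p ∈ P γ, (fun g : G => g * δf p) '' K with hAdef
    have hAcpt : IsCompact A :=
      hPfin.isCompact_biUnion (fun p _ => hK.image (continuous_mul_right (δf p)))
    set B : Set G := η ⁻¹' D ∩ (fun g : G => η (g * γ)) ⁻¹' D with hBdef
    have hBclosed : IsClosed B :=
      (hD.isClosed.preimage hηc).inter
        (hD.isClosed.preimage (hηc.comp (continuous_mul_right γ)))
    refine ⟨A ∩ B, hAcpt.inter_right hBclosed, fun g hg => hg.2, ?_⟩
    rw [hkey γ hγ]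
    apply Set.Subset.antisymm
    · rintro x ⟨k, hkK, hkx, p, hpP, hD1, hD2⟩
      refine ⟨k * δf p, ⟨?_, ?_, ?_⟩, ?_⟩
      · exact Set.mem_iUnion₂.mpr ⟨p, hpP, k, hkK, rfl⟩
      · show η (k * δf p) ∈ D
        rw [hη, hcomp k (δf p), ← hδf2 p hpP]
        exact hD1
      · show η (k * δf p * γ) ∈ D
        rw [hη, mul_assoc, hcomp k (δf p * γ), ← hδf3 p hpP]
        exact hD2
      · rw [QuotientGroup.mk_mul_of_mem k (hδf1 p hpP)]
        exact hkx
    · rintro _ ⟨g, ⟨hgA, hgB⟩, rfl⟩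
      obtain ⟨p, hpP, k, hkK, hkg0⟩ := Set.mem_iUnion₂.mp hgA
      have hkg : k * δf p = g := hkg0
      refine ⟨k, hkK, ?_, p, hpP, ?_, ?_⟩
      · show (k : G ⧸ Γ) = (g : G ⧸ Γ)
        rw [← hkg, QuotientGroup.mk_mul_of_mem k (hδf1 p hpP)]
      · rw [hδf2 p hpP, ← hcomp k (δf p), hkg, ← hη g]
        exact hgB.1
      · rw [hδf3 p hpP, ← hcomp k (δf p * γ), ← mul_assoc, hkg, ← hη (g * γ)]
        exact hgB.2
end

section
/- Let N be a nilpotent n × n real matrix, let C ⊆ ℝⁿ be a compact set such that N v ≠ 0 for every v ∈ C (i.e., C contains no fixed point of the flow t ↦ exp(tN)), and let Θ ⊆ ℝⁿ be a compact set. Then there exists T₀ > 0 such that for every v ∈ C there is some t ∈ [0, T₀] with exp(t N) v ∉ Θ. -/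
open Polynomial Filter

/-- exp of a scalar multiple of a nilpotent matrix is a finite sum. -/
lemma exp_smul_nilpotent_eq_sum {n : ℕ} (N : Matrix (Fin n) (Fin n) ℝ) {m : ℕ}
    (hm : N ^ m = 0) (t : ℝ) :
    NormedSpace.exp (t • N) =
      ∑ k ∈ Finset.range m, (t ^ k * ((k.factorial : ℝ))⁻¹) • N ^ k := by
  rw [NormedSpace.exp_eq_tsum (𝕂 := ℝ)]
  refine (tsum_eq_sum (s := Finset.range m) ?_).trans (Finset.sum_congr rfl ?_)
  · intro k hk
    have hkm : m ≤ k := by simpa using hk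
    have : N ^ k = 0 := by
      rw [← Nat.add_sub_cancel' hkm, pow_add, hm, zero_mul]
    rw [_root_.smul_pow, this, smul_zero, smul_zero]
  · intro k _
    rw [_root_.smul_pow, smul_smul, mul_comm]

/-- Per-point escape lemma. -/
lemma escape_aux {n : ℕ} (N : Matrix (Fin n) (Fin n) ℝ) (hN : IsNilpotent N)
    (v : Fin n → ℝ) (hv : N.mulVec v ≠ 0)
    (Θ : Set (Fin n → ℝ)) (hΘ : IsCompact Θ) :
    ∃ t : ℝ, 0 ≤ t ∧ (NormedSpace.exp (t • N)).mulVec v ∉ Θ := by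
  obtain ⟨m₀, hm₀⟩ := hN
  set M := m₀ + 1 with hMdef
  have hM : N ^ M = 0 := by rw [hMdef, pow_succ, hm₀, zero_mul]
  set P : ℕ → Prop := fun k => (N ^ k).mulVec v ≠ 0 with hPdef
  have hdec : DecidablePred P := fun k => Classical.dec _
  have hP1 : P 1 := by simpa [hPdef] using hv
  have h1M : 1 ≤ M := Nat.succ_le_succ (Nat.zero_le _)
  set d := Nat.findGreatest P M with hddef
  have hPd : P d := Nat.findGreatest_spec h1M hP1
  have hd1 : 1 ≤ d := Nat.le_findGreatest h1M hP1
  have hdM : d < M := by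
    rcases lt_or_eq_of_le (Nat.findGreatest_le (P := P) M) with h | h
    · exact h
    · exfalso; apply hPd; show (N ^ d).mulVec v = 0
      have hdM' : d = M := hddef.trans h
      rw [hdM', hM, Matrix.zero_mulVec]
  -- vanishing beyond d
  have hvanish : ∀ k, d < k → (N ^ k).mulVec v = 0 := by
    intro k hk
    by_cases hkM : k ≤ M
    · by_contra h
      exact Nat.findGreatest_is_greatest hk hkM h
    · push_neg at hkM
      have : N ^ k = 0 := by
        rw [← Nat.add_sub_cancel' hkM.le, pow_add, hM, zero_mul]
      rw [this]; simp [Matrix.mulVec]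
  -- the flow as finite sum up to d
  have hflow : ∀ t : ℝ, (NormedSpace.exp (t • N)).mulVec v =
      ∑ k ∈ Finset.range (d + 1), (t ^ k * ((k.factorial : ℝ))⁻¹) • (N ^ k).mulVec v := by
    intro t
    rw [exp_smul_nilpotent_eq_sum N hM t]
    have hsum : ∀ (s : Finset ℕ) (f : ℕ → Matrix (Fin n) (Fin n) ℝ),
        (∑ k ∈ s, f k).mulVec v = ∑ k ∈ s, (f k).mulVec v := fun s f =>
      map_sum (AddMonoidHom.mk' (fun A : Matrix (Fin n) (Fin n) ℝ => A.mulVec v)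
        (fun A B => Matrix.add_mulVec A B v)) f s
    rw [hsum]
    simp_rw [Matrix.smul_mulVec]
    refine (Finset.sum_subset ?_ ?_).symm
    · exact Finset.range_subset_range.2 hdM
    · intro k _ hk
      have : d < k := by simpa using hk
      rw [hvanish k this, smul_zero]
  -- pick a coordinate
  obtain ⟨i, hi⟩ : ∃ i, ((N ^ d).mulVec v) i ≠ 0 := by
    by_contra h; push_neg at h; exact hPd (funext h)
  -- polynomial
  set Q : ℝ[X] := ∑ k ∈ Finset.range (d + 1),
      C (((N ^ k).mulVec v i) * ((k.factorial : ℝ))⁻¹) * X ^ k with hQ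
  have hQeval : ∀ t : ℝ, Q.eval t = ((NormedSpace.exp (t • N)).mulVec v) i := by
    intro t
    rw [hflow t, hQ]
    simp only [eval_finset_sum, eval_mul, eval_C, eval_pow, eval_X,
      Finset.sum_apply, Pi.smul_apply, smul_eq_mul]
    apply Finset.sum_congr rfl
    intro k _; ring
  have hQcoeff : Q.coeff d = ((N ^ d).mulVec v i) * ((d.factorial : ℝ))⁻¹ := by
    rw [hQ, Polynomial.finset_sum_coeff]
    simp only [coeff_C_mul, coeff_X_pow]
    rw [Finset.sum_eq_single d]
    · simp
    · intro k _ hk; simp [Ne.symm hk]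
    · intro h; exact absurd (Finset.self_mem_range_succ d) h
  have hQc0 : Q.coeff d ≠ 0 := by
    rw [hQcoeff]
    exact mul_ne_zero hi (by positivity)
  have hQne : Q ≠ 0 := fun h => hQc0 (by simp [h])
  have hdeg : 0 < Q.degree := by
    rw [← Polynomial.natDegree_pos_iff_degree_pos]
    exact lt_of_lt_of_le hd1 (Polynomial.le_natDegree_of_ne_zero hQc0)
  have htend := Polynomial.abs_tendsto_atTop Q hdeg
  obtain ⟨R, hR⟩ := hΘ.isBounded.subset_closedBall 0
  have hev : ∀ᶠ t in atTop, R < |Q.eval t| := htend.eventually_gt_atTop R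
  obtain ⟨t, ht0, htR⟩ := ((eventually_ge_atTop (0:ℝ)).and hev).exists
  refine ⟨t, ht0, fun hmem => ?_⟩
  have h1 := hR hmem
  rw [Metric.mem_closedBall, dist_zero_right] at h1
  have h2 : |((NormedSpace.exp (t • N)).mulVec v) i| ≤ ‖(NormedSpace.exp (t • N)).mulVec v‖ := by
    simpa using norm_le_pi_norm ((NormedSpace.exp (t • N)).mulVec v) i
  rw [← hQeval t] at h2
  linarith [htR]

/-- Let `N` be a nilpotent `n × n` real matrix, `C ⊆ ℝⁿ` a
compact set containing no fixed point of the flow `t ↦ exp (t N)` (i.e.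
`N v ≠ 0` for all `v ∈ C`), and `Θ ⊆ ℝⁿ` a compact set.  Then there is `T₀ > 0`
such that every `v ∈ C` leaves `Θ` at some time `t ∈ [0, T₀]`:
`exp (t N) v ∉ Θ`. -/
theorem exists_time_escaping_compact
    {n : ℕ} (N : Matrix (Fin n) (Fin n) ℝ) (hN : IsNilpotent N)
    (C : Set (Fin n → ℝ)) (hC : IsCompact C)
    (hfix : ∀ v ∈ C, N.mulVec v ≠ 0)
    (Θ : Set (Fin n → ℝ)) (hΘ : IsCompact Θ) :
    ∃ T₀ : ℝ, 0 < T₀ ∧ ∀ v ∈ C, ∃ t ∈ Set.Icc (0 : ℝ) T₀,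
      (NormedSpace.exp (t • N)).mulVec v ∉ Θ := by
  -- per point, choose an escape time
  have hpt : ∀ v ∈ C, ∃ t : ℝ, 0 ≤ t ∧ (NormedSpace.exp (t • N)).mulVec v ∉ Θ :=
    fun v hv => escape_aux N hN v (hfix v hv) Θ hΘ
  choose! τ hτ0 hτ using hpt
  -- open cover by preimages of Θᶜ
  have hcont : ∀ t : ℝ, Continuous fun w : Fin n → ℝ => (NormedSpace.exp (t • N)).mulVec w := by
    intro t
    simp_rw [← Matrix.mulVecLin_apply]
    exact LinearMap.continuous_of_finiteDimensional _
  have hopen : ∀ v : Fin n → ℝ, IsOpen {w | (NormedSpace.exp (τ v • N)).mulVec w ∉ Θ} := by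
    intro v
    exact hΘ.isClosed.isOpen_compl.preimage (hcont (τ v))
  have hcover : C ⊆ ⋃ v ∈ C, {w | (NormedSpace.exp (τ v • N)).mulVec w ∉ Θ} := by
    intro v hv
    exact Set.mem_biUnion hv (hτ v hv)
  obtain ⟨s, hsC, hsfin, hscover⟩ := hC.elim_finite_subcover_image (fun v _ => hopen v) hcover
  have hnonneg : ∀ w ∈ hsfin.toFinset, 0 ≤ τ w := by
    intro w hw
    exact hτ0 w (hsC (hsfin.mem_toFinset.1 hw))
  refine ⟨1 + ∑ w ∈ hsfin.toFinset, τ w, ?_, ?_⟩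
  · have : (0:ℝ) ≤ ∑ w ∈ hsfin.toFinset, τ w := Finset.sum_nonneg hnonneg
    linarith
  · intro v hv
    obtain ⟨w, hws, hwv⟩ := Set.mem_iUnion₂.1 (hscover hv)
    refine ⟨τ w, ⟨hτ0 w (hsC hws), ?_⟩, hwv⟩
    have h1 : τ w ≤ ∑ u ∈ hsfin.toFinset, τ u :=
      Finset.single_le_sum hnonneg (hsfin.mem_toFinset.2 hws)
    linarith
end

section
/- Let p be a prime, let N be a nilpotent n × n matrix over ℚ_p, and for t ∈ ℚ_p define the unipotent matrix u(t) = Σ_{k=0}^{n−1} (t^k / k!) N^k (a finite sum, since N^n = 0). Let v ∈ ℚ_pⁿ with N v ≠ 0. Then ‖u(t) v‖ → ∞ as |t|_p → ∞, where ‖(x_1,…,x_n)‖ = max_i |x_i|_p is the sup norm on ℚ_pⁿ. In particular, the orbit {u(t) v : t ∈ ℚ_p} is not contained in any compact subset of ℚ_pⁿ. -/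
open Filter Polynomial

lemma aux_sum_mulVec {p : ℕ} [Fact p.Prime] {n : ℕ} {ι : Type*} (s : Finset ι)
    (A : ι → Matrix (Fin n) (Fin n) ℚ_[p]) (v : Fin n → ℚ_[p]) :
    (∑ k ∈ s, A k).mulVec v = ∑ k ∈ s, (A k).mulVec v := by
  induction s using Finset.cons_induction with
  | empty => simp [Matrix.zero_mulVec]
  | cons a s ha ih => simp [Finset.sum_cons, Matrix.add_mulVec, ih]

/-- Let `p` be a prime, `N` a nilpotent `n × n` matrix over
`ℚ_p`, and for `t ∈ ℚ_p` let `u t = ∑_{k=0}^{n-1} (t^k / k!) • N^k` (a finite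
sum, since `N^n = 0`).  If `v ∈ ℚ_pⁿ` satisfies `N v ≠ 0`, then
`‖u t v‖ → ∞` as `|t|_p → ∞`, where `ℚ_pⁿ` carries the sup norm
`‖x‖ = max_i |x_i|_p`.  In particular the orbit `{u t v : t ∈ ℚ_p}` is not
contained in any compact subset of `ℚ_pⁿ`. -/
theorem padic_unipotent_orbit_norm_tendsto_atTop
    (p : ℕ) [Fact p.Prime] {n : ℕ}
    (N : Matrix (Fin n) (Fin n) ℚ_[p]) (hN : IsNilpotent N)
    (u : ℚ_[p] → Matrix (Fin n) (Fin n) ℚ_[p])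
    (hu : ∀ t, u t = ∑ k ∈ Finset.range n, (t ^ k / (k.factorial : ℚ_[p])) • N ^ k)
    (v : Fin n → ℚ_[p]) (hv : N.mulVec v ≠ 0) :
    Tendsto (fun t : ℚ_[p] => ‖(u t).mulVec v‖)
      (comap (fun t : ℚ_[p] => ‖t‖) atTop) atTop ∧
    ∀ Θ : Set (Fin n → ℚ_[p]), IsCompact Θ →
      ¬ (Set.range (fun t : ℚ_[p] => (u t).mulVec v) ⊆ Θ) := by
  classical
  -- N ^ n = 0
  have hNn : N ^ n = 0 := by
    have h1 : N.charpoly = X ^ (Fintype.card (Fin n)) := by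
      have h := (Matrix.isNilpotent_charpoly_sub_pow_of_isNilpotent hN).eq_zero
      rwa [sub_eq_zero] at h
    have h2 := N.aeval_self_charpoly
    rw [h1] at h2
    simpa using h2
  -- the vanishing order
  have hex : ∃ k, (N ^ k).mulVec v = 0 := ⟨n, by rw [hNn, Matrix.zero_mulVec]⟩
  set m := Nat.find hex with hm
  have hm0 : (N ^ m).mulVec v = 0 := Nat.find_spec hex
  have hmlt : ∀ k < m, (N ^ k).mulVec v ≠ 0 := fun k hk => Nat.find_min hex hk
  have hm2 : 2 ≤ m := by
    by_contra h
    push_neg at h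
    interval_cases m
    · have h0 : v = 0 := by simpa [Matrix.one_mulVec] using hm0
      exact hv (by simp [h0, Matrix.mulVec_zero])
    · exact hv (by simpa using hm0)
  have hmn : m ≤ n := Nat.find_le (by rw [hNn, Matrix.zero_mulVec])
  set d := m - 1 with hd
  have hd1 : 1 ≤ d := by omega
  have hdm : d + 1 = m := by omega
  have hdn : d < n := by omega
  set w : Fin n → ℚ_[p] := (N ^ d).mulVec v with hw
  have hw0 : w ≠ 0 := hmlt d (by omega)
  -- vanishing above d
  have hhigh : ∀ k, d < k → (N ^ k).mulVec v = 0 := by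
    intro k hk
    have : N ^ k = N ^ (k - m) * N ^ m := by
      rw [← pow_add]; congr 1; omega
    rw [this, ← Matrix.mulVec_mulVec, hm0, Matrix.mulVec_zero]
  -- expand u t v
  have hutv : ∀ t, (u t).mulVec v
      = ∑ k ∈ Finset.range n, (t ^ k / (k.factorial : ℚ_[p])) • (N ^ k).mulVec v := by
    intro t
    rw [hu t, aux_sum_mulVec]
    exact Finset.sum_congr rfl fun k _ => Matrix.smul_mulVec _ _ _
  -- constants
  have hfac : ∀ k : ℕ, ((k.factorial : ℚ_[p]) ≠ 0) := fun k => by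
    exact_mod_cast Nat.cast_ne_zero.mpr k.factorial_ne_zero
  set c0 : ℝ := ‖w‖ / ‖((d.factorial : ℚ_[p]))‖ with hc0
  have hc0pos : 0 < c0 := by
    apply div_pos (norm_pos_iff.mpr hw0) (norm_pos_iff.mpr (hfac d))
  set A : ℝ := ∑ k ∈ Finset.range n, ‖(N ^ k).mulVec v‖ / ‖((k.factorial : ℚ_[p]))‖ with hA
  have hAnonneg : 0 ≤ A :=
    Finset.sum_nonneg fun k _ => div_nonneg (norm_nonneg _) (norm_nonneg _)
  -- the norm of each term
  have hterm : ∀ (t : ℚ_[p]) (k : ℕ),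
      ‖(t ^ k / (k.factorial : ℚ_[p])) • (N ^ k).mulVec v‖
        = ‖t‖ ^ k * (‖(N ^ k).mulVec v‖ / ‖((k.factorial : ℚ_[p]))‖) := by
    intro t k
    rw [norm_smul, norm_div, norm_pow]
    ring
  -- key lower bound
  have key : ∀ t : ℚ_[p], 1 ≤ ‖t‖ → 2 * A / c0 ≤ ‖t‖ →
      c0 / 2 * ‖t‖ ≤ ‖(u t).mulVec v‖ := by
    intro t ht1 htA
    have hmain : ‖(t ^ d / (d.factorial : ℚ_[p])) • w‖ = ‖t‖ ^ d * c0 := hterm t d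
    -- split the sum
    have hdmem : d ∈ Finset.range n := Finset.mem_range.mpr hdn
    have hsplit : (u t).mulVec v = (t ^ d / (d.factorial : ℚ_[p])) • w
        + ∑ k ∈ (Finset.range n).erase d, (t ^ k / (k.factorial : ℚ_[p])) • (N ^ k).mulVec v := by
      rw [hutv t, ← Finset.add_sum_erase _ _ hdmem]
    -- bound the rest
    have hrest : ‖∑ k ∈ (Finset.range n).erase d,
        (t ^ k / (k.factorial : ℚ_[p])) • (N ^ k).mulVec v‖ ≤ ‖t‖ ^ (d - 1) * A := by
      refine le_trans (norm_sum_le _ _) ?_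
      rw [hA, Finset.mul_sum]
      rw [← Finset.sum_erase_add _ _ hdmem]
      have h1 : ∀ k ∈ (Finset.range n).erase d,
          ‖(t ^ k / (k.factorial : ℚ_[p])) • (N ^ k).mulVec v‖
            ≤ ‖t‖ ^ (d - 1) * (‖(N ^ k).mulVec v‖ / ‖((k.factorial : ℚ_[p]))‖) := by
        intro k hk
        rw [hterm t k]
        rcases lt_or_gt_of_ne (Finset.ne_of_mem_erase hk) with hkd | hkd
        · apply mul_le_mul_of_nonneg_right _ (div_nonneg (norm_nonneg _) (norm_nonneg _))
          exact pow_le_pow_right₀ ht1 (by omega)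
        · rw [hhigh k hkd]
          simp [mul_nonneg (pow_nonneg (norm_nonneg t) _)
            (div_nonneg (norm_nonneg _) (norm_nonneg _))]
      refine le_trans (Finset.sum_le_sum h1) ?_
      exact le_add_of_nonneg_right (mul_nonneg (pow_nonneg (norm_nonneg t) _)
        (div_nonneg (norm_nonneg _) (norm_nonneg _)))
    -- combine
    have hlow : ‖t‖ ^ d * c0 - ‖t‖ ^ (d - 1) * A ≤ ‖(u t).mulVec v‖ := by
      rw [hsplit]
      calc ‖t‖ ^ d * c0 - ‖t‖ ^ (d - 1) * A
          ≤ ‖(t ^ d / (d.factorial : ℚ_[p])) • w‖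
            - ‖∑ k ∈ (Finset.range n).erase d,
                (t ^ k / (k.factorial : ℚ_[p])) • (N ^ k).mulVec v‖ := by
            rw [hmain]; linarith
        _ ≤ _ := by
            have := norm_sub_norm_le ((t ^ d / (d.factorial : ℚ_[p])) • w)
              (- ∑ k ∈ (Finset.range n).erase d,
                  (t ^ k / (k.factorial : ℚ_[p])) • (N ^ k).mulVec v)
            simpa [sub_neg_eq_add] using this
    have hpow : ‖t‖ ^ d = ‖t‖ ^ (d - 1) * ‖t‖ := by
      rw [← pow_succ]; congr 1; omega
    have htpos : (0:ℝ) < ‖t‖ := lt_of_lt_of_le one_pos ht1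
    have hpd1 : (1:ℝ) ≤ ‖t‖ ^ (d - 1) := one_le_pow₀ ht1
    have hAle : A ≤ ‖t‖ * c0 / 2 := by
      rw [div_le_iff₀ hc0pos] at htA
      nlinarith
    calc c0 / 2 * ‖t‖ ≤ ‖t‖ ^ (d - 1) * (‖t‖ * c0 / 2) := by nlinarith
      _ = ‖t‖ ^ d * c0 - ‖t‖ ^ (d - 1) * (‖t‖ * c0 / 2) := by rw [hpow]; ring
      _ ≤ ‖t‖ ^ d * c0 - ‖t‖ ^ (d - 1) * A := by nlinarith
      _ ≤ _ := hlow
  -- tendsto_comap : ‖·‖ tends to atTop along the comap filter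
  have hcomap : Tendsto (fun t : ℚ_[p] => ‖t‖) (comap (fun t : ℚ_[p] => ‖t‖) atTop) atTop :=
    tendsto_comap
  constructor
  · have hev : ∀ᶠ t : ℚ_[p] in comap (fun t : ℚ_[p] => ‖t‖) atTop,
        c0 / 2 * ‖t‖ ≤ ‖(u t).mulVec v‖ := by
      filter_upwards [hcomap.eventually (eventually_ge_atTop (max 1 (2 * A / c0)))] with t ht
      exact key t (le_trans (le_max_left _ _) ht) (le_trans (le_max_right _ _) ht)
    exact tendsto_atTop_mono' _ hev ((tendsto_const_mul_atTop_of_pos (by linarith)).mpr hcomap)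
  · intro Θ hΘ hsub
    obtain ⟨R, hR⟩ := isBounded_iff_forall_norm_le.mp hΘ.isBounded
    obtain ⟨t, ht⟩ := NormedField.exists_lt_norm ℚ_[p] (max (max 1 (2 * A / c0)) (2 * R / c0))
    have ht1 : 1 ≤ ‖t‖ := le_trans (le_trans (le_max_left _ _) (le_max_left _ _)) ht.le
    have htA : 2 * A / c0 ≤ ‖t‖ :=
      le_trans (le_trans (le_max_right _ _) (le_max_left _ _)) ht.le
    have hk := key t ht1 htA
    have hmem : (u t).mulVec v ∈ Θ := hsub ⟨t, rfl⟩
    have hRt : 2 * R / c0 < ‖t‖ := lt_of_le_of_lt (le_max_right _ _) ht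
    have : R < c0 / 2 * ‖t‖ := by
      rw [div_lt_iff₀ hc0pos] at hRt
      nlinarith
    exact absurd (hR _ hmem) (by linarith)
end
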